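/- arXiv:0909.1164 — 3 statements merged into one kernel-verified Lean document; each statement's English description precedes it below -/
import Mathlib

section
/- For every N ∈ ℕ, every m ∈ ℕ, all a, b ∈ ℕ and all tuples c, d : Fin m → ℕ, one has the normal-ordering recursion D_N(a,b) ∘ V_N(c|d) = V_N(cons a c | cons b d) + ∑_{i : Fin m} δ_{b, c i} · V_N(update c i a | d), where cons a c : Fin (m+1) → ℕ prepends a to the tuple c, update c i a replaces the i-th entry of c by a, and δ_{x,y} = 1 if x = y and 0 otherwise. -/
open MvPolynomial

noncomputable abbrev R : Type := MvPolynomial (ℕ × ℕ) ℂ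

/-- The `gl(∞)` generator `D_N(a,b) p = ∑_{e<N} X_{(a,e)} ∂p/∂X_{(b,e)}`. -/
noncomputable def Dop (N a b : ℕ) : R →ₗ[ℂ] R :=
  ∑ e ∈ Finset.range N,
    (LinearMap.mulLeft ℂ (X (a, e))) ∘ₗ (pderiv ((b, e) : ℕ × ℕ)).toLinearMap

/-- The normally ordered operator `V_N(a|b)`. -/
noncomputable def Vop (N : ℕ) {m : ℕ} (a b : Fin m → ℕ) : R →ₗ[ℂ] R :=
  ∑ e : Fin m → Fin N,
    (LinearMap.mulLeft ℂ (∏ i, X (a i, (e i : ℕ)))) ∘ₗ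
      (List.ofFn fun i => (pderiv ((b i, (e i : ℕ)) : ℕ × ℕ)).toLinearMap).prod

/-- The cut-and-join operator `W_N(σ) = ∑_a V_N(a | a∘σ)`. -/
noncomputable def Wop (N : ℕ) {m : ℕ} (σ : Equiv.Perm (Fin m)) : R →ₗ[ℂ] R :=
  ∑ a : Fin m → Fin N, Vop N (fun i => (a i : ℕ)) (fun i => (a (σ i) : ℕ))

/-- Compatibility of index tuples with a two-fold graph. -/
def Compatible {N m : ℕ} (α β : Fin m → ℕ) (a b : Fin m → Fin N) : Prop :=
  (∀ i j, a i = a j ↔ α i = α j) ∧ (∀ i j, b i = b j ↔ β i = β j)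

instance {N m : ℕ} (α β : Fin m → ℕ) (a b : Fin m → Fin N) :
    Decidable (Compatible α β a b) :=
  inferInstanceAs (Decidable (_ ∧ _))

/-- The unnormalized graph operator `Ṽ_N(α,β)`. -/
noncomputable def Vt (N : ℕ) {m : ℕ} (α β : Fin m → ℕ) : R →ₗ[ℂ] R :=
  ∑ p ∈ Finset.univ.filter
      (fun p : (Fin m → Fin N) × (Fin m → Fin N) => Compatible α β p.1 p.2),
    Vop N (fun i => (p.1 i : ℕ)) (fun i => (p.2 i : ℕ))

lemma pderiv_prod_X_finset {ι : Type*} [DecidableEq ι] (s : Finset ι)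
    (u : ι → ℕ × ℕ) (v : ℕ × ℕ) :
    pderiv v (∏ i ∈ s, (X (u i) : R)) =
      ∑ i ∈ s, if u i = v then ∏ j ∈ s.erase i, (X (u j) : R) else 0 := by
  induction s using Finset.induction_on with
  | empty => simp
  | @insert a s ha ih =>
    rw [Finset.prod_insert ha, pderiv_mul, ih, Finset.sum_insert ha, Finset.erase_insert ha]
    congr 1
    · simp [Pi.single_apply, ite_mul]
    · rw [Finset.mul_sum]
      refine Finset.sum_congr rfl fun i hi => ?_
      rw [Finset.erase_insert_of_ne (fun h : a = i => ha (h ▸ hi)),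
        Finset.prod_insert (fun h => ha (Finset.mem_of_mem_erase h)), mul_ite, mul_zero]

lemma sum_comm3 {α β γ M : Type*} [AddCommMonoid M] (s : Finset α) (t : Finset β)
    (u : Finset γ) (f : α → β → γ → M) :
    (∑ x ∈ s, ∑ y ∈ t, ∑ z ∈ u, f x y z) = ∑ z ∈ u, ∑ y ∈ t, ∑ x ∈ s, f x y z :=
  calc (∑ x ∈ s, ∑ y ∈ t, ∑ z ∈ u, f x y z)
      = ∑ x ∈ s, ∑ z ∈ u, ∑ y ∈ t, f x y z :=
        Finset.sum_congr rfl fun _ _ => Finset.sum_comm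
    _ = ∑ z ∈ u, ∑ x ∈ s, ∑ y ∈ t, f x y z := Finset.sum_comm
    _ = ∑ z ∈ u, ∑ y ∈ t, ∑ x ∈ s, f x y z :=
        Finset.sum_congr rfl fun _ _ => Finset.sum_comm

lemma pderiv_toLinearMap_apply (v : ℕ × ℕ) (q : R) :
    (pderiv v).toLinearMap q = pderiv v q := rfl

/-- the normal-ordering recursion for `D_N(a,b) ∘ V_N(c|d)`. -/
theorem Dop_comp_Vop (N m : ℕ) (a b : ℕ) (c d : Fin m → ℕ) :
    Dop N a b ∘ₗ Vop N c d =
      Vop N (Fin.cons a c) (Fin.cons b d) +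
        ∑ i : Fin m, (if b = c i then (1:ℂ) else 0) • Vop N (Function.update c i a) d := by
  classical
  apply LinearMap.ext; intro p
  set P : (Fin m → Fin N) → R := fun f =>
    (List.ofFn fun i => (pderiv ((d i, (f i : ℕ)) : ℕ × ℕ)).toLinearMap).prod p with hP
  -- LHS expansion
  have hL : (Dop N a b ∘ₗ Vop N c d) p =
      ∑ e ∈ Finset.range N, ∑ f : Fin m → Fin N,
        (X (a, e) * ((∏ i, X (c i, (f i : ℕ))) *
            pderiv ((b, e) : ℕ × ℕ) (P f))
         + X (a, e) * (pderiv ((b, e) : ℕ × ℕ) (∏ i, X (c i, (f i : ℕ))) * P f)) := by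
    simp only [Dop, Vop, LinearMap.comp_apply, LinearMap.sum_apply, LinearMap.comp_apply,
      LinearMap.mulLeft_apply, pderiv_toLinearMap_apply]
    refine Finset.sum_congr rfl fun e _ => ?_
    rw [map_sum, Finset.mul_sum]
    refine Finset.sum_congr rfl fun f _ => ?_
    rw [pderiv_mul, mul_add, add_comm]
  rw [hL]
  simp only [Finset.sum_add_distrib]
  congr 1
  · -- cons term
    rw [Vop, LinearMap.sum_apply]
    rw [← Fin.sum_univ_eq_sum_range (fun e => ∑ f : Fin m → Fin N,
      X (a, e) * ((∏ i, X (c i, (f i : ℕ))) * pderiv ((b, e) : ℕ × ℕ) (P f))) N]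
    rw [← Fintype.sum_prod_type']
    refine Fintype.sum_equiv (Fin.consEquiv fun _ => Fin N) _ _ fun q => ?_
    simp only [Fin.consEquiv_apply, LinearMap.comp_apply, LinearMap.mulLeft_apply]
    rw [Fin.prod_univ_succ, List.ofFn_succ, List.prod_cons]
    simp only [Fin.cons_zero, Fin.cons_succ, Module.End.mul_apply, pderiv_toLinearMap_apply,
      mul_assoc, hP]
  · -- correction term
    have step : ∀ e ∈ Finset.range N, ∀ f : Fin m → Fin N,
        X (a, e) * (pderiv ((b, e) : ℕ × ℕ) (∏ i, X (c i, (f i : ℕ))) * P f) =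
        ∑ i : Fin m, if ((f i : ℕ)) = e then
          (if c i = b then
            X (a, e) * ((∏ j ∈ Finset.univ.erase i, X (c j, (f j : ℕ))) * P f) else 0)
          else 0 := by
      intro e _ f
      rw [pderiv_prod_X_finset Finset.univ (fun i => (c i, (f i : ℕ))) ((b, e) : ℕ × ℕ)]
      rw [Finset.sum_mul, Finset.mul_sum]
      refine Finset.sum_congr rfl fun i _ => ?_
      rw [ite_mul, zero_mul, mul_ite, mul_zero]
      by_cases h1 : c i = b <;> by_cases h2 : ((f i : ℕ)) = e <;>
        simp [Prod.ext_iff, h1, h2]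
    rw [Finset.sum_congr rfl fun e he => Finset.sum_congr rfl (fun f _ => step e he f)]
    rw [sum_comm3]
    simp only [LinearMap.sum_apply, LinearMap.smul_apply]
    refine Finset.sum_congr rfl fun i _ => ?_
    have inner : ∀ f : Fin m → Fin N,
        (∑ e ∈ Finset.range N, if ((f i : ℕ)) = e then
          (if c i = b then
            X (a, e) * ((∏ j ∈ Finset.univ.erase i, X (c j, (f j : ℕ))) * P f) else 0)
          else 0) =
        if c i = b then
          X (a, ((f i : ℕ))) * ((∏ j ∈ Finset.univ.erase i, X (c j, (f j : ℕ))) * P f)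
          else 0 := by
      intro f
      rw [Finset.sum_ite_eq]
      simp [Fin.is_lt]
    rw [Finset.sum_congr rfl fun f _ => inner f]
    by_cases hb : b = c i
    · rw [if_pos hb, one_smul]
      simp only [if_pos hb.symm]
      rw [Vop, LinearMap.sum_apply]
      refine Finset.sum_congr rfl fun f _ => ?_
      simp only [LinearMap.comp_apply, LinearMap.mulLeft_apply, hP]
      rw [← Finset.mul_prod_erase Finset.univ
        (fun j => X ((Function.update c i a) j, ((f j : ℕ)))) (Finset.mem_univ i),
        Function.update_self, mul_assoc]
      congr 2
      exact Finset.prod_congr rfl fun j hj => by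
        rw [Function.update_of_ne (Finset.ne_of_mem_erase hj)]
    · rw [if_neg hb, zero_smul]
      simp only [if_neg (fun h : c i = b => hb h.symm), Finset.sum_const_zero]
end

section
/- For every N ∈ ℕ, every m ∈ ℕ, all a, b ∈ ℕ and all tuples c, d : Fin m → ℕ, the commutator of D_N(a,b) with the normally ordered operator V_N(c|d) is given by the adjoint-action formula: D_N(a,b) ∘ V_N(c|d) − V_N(c|d) ∘ D_N(a,b) = ∑_{i : Fin m} δ_{b, c i} · V_N(update c i a | d) − ∑_{i : Fin m} δ_{a, d i} · V_N(c | update d i b), where update c i a replaces the i-th entry of c by a, and δ_{x,y} = 1 if x = y and 0 otherwise. -/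
open MvPolynomial

/-!
`D_N(a,b)` is the sum over colours `f < N` of the operators `X_x ∂_y` with `x = (a,f)`,
`y = (b,f)`, and each summand `X^u ∂^v` of `V_N(c|d)` is a monomial times a product of partial
derivatives. Since `∂_y` is a derivation, `[X_x ∂_y, X^u] = X_x ∂_y(X^u)` turns one factor
`X_{u i} = X_y` into `X_x`; since the `∂`'s commute, `[∂^v, X_x ∂_y]` turns one derivative
`∂_{v i} = ∂_x` into `∂_y`. Summing over `f`, the Kronecker deltas in the colour select `f = e i`.
-/

open MvPolynomial

namespace Ring

variable {A : Type*} [NonUnitalRing A]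

theorem mul_lie (a b c : A) : ⁅a * b, c⁆ = a * ⁅b, c⁆ + ⁅a, c⁆ * b := by
  simp only [lie_def, mul_sub, sub_mul, mul_assoc]; abel

theorem lie_mul (a b c : A) : ⁅a, b * c⁆ = ⁅a, b⁆ * c - b * ⁅c, a⁆ := by
  simp only [lie_def, mul_sub, sub_mul, mul_assoc]; abel

end Ring

theorem Finset.sum_ite_prodMk_eq_smul {α β K M : Type*} [DecidableEq α] [DecidableEq β]
    [Semiring K] [AddCommMonoid M] [Module K M] (s : Finset β) {e : β} (he : e ∈ s) (u v : α)
    (T : β → M) :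
    ∑ f ∈ s, (if (u, e) = (v, f) then (1 : K) else 0) • T f =
      (if v = u then (1 : K) else 0) • T e := by
  simp [Prod.ext_iff, ite_and, Finset.sum_ite_eq, he, eq_comm]

theorem Function.update_prodMk {ι α β : Type*} [DecidableEq ι] (c : ι → α) (e : ι → β) (i : ι)
    (a : α) :
    Function.update (fun k => (c k, e k)) i (a, e i) = fun k => (Function.update c i a k, e k) := by
  funext k
  rcases eq_or_ne k i with rfl | h
  · simp
  · simp [h]

namespace MvPolynomial

variable {σ K : Type*}

section CommSemiring

variable [CommSemiring K]

theorem pderiv_pderiv_comm (i j : σ) (p : MvPolynomial σ K) :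
    pderiv i (pderiv j p) = pderiv j (pderiv i p) := by
  classical
  induction p using MvPolynomial.induction_on with
  | C => simp
  | add p q hp hq => simp [hp, hq]
  | mul_X p k ih => simp [pderiv_X, ih, Pi.single_apply, apply_ite (pderiv _)]; ring

theorem X_mul_pderiv_prod_X [DecidableEq σ] {m : ℕ} (x y : σ) (g : Fin m → σ) :
    X x * pderiv y (∏ i, X (g i) : MvPolynomial σ K) =
      ∑ i, (if g i = y then (1 : K) else 0) • ∏ j, X (Function.update g i x j) := by
  induction g using Fin.consInduction with
  | elim0 => simp
  | cons z g ih =>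
    simp only [Fin.prod_univ_succ, Fin.sum_univ_succ, Fin.cons_zero, Fin.cons_succ,
      ← Fin.cons_update, Fin.update_cons_zero, Derivation.leibniz, smul_eq_mul, mul_add,
      mul_left_comm (X x), ih, Finset.mul_sum, mul_smul_comm, pderiv_X, Pi.single_apply]
    rw [add_comm]
    congr 1
    split_ifs <;> simp [mul_comm]

variable (K) in
noncomputable def pderivOp (i : σ) : Module.End K (MvPolynomial σ K) :=
  (pderiv i).toLinearMap

variable (K) in
noncomputable def pderivProd {m : ℕ} (g : Fin m → σ) : Module.End K (MvPolynomial σ K) :=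
  (List.ofFn fun k => pderivOp K (g k)).prod

@[simp] theorem pderivOp_apply (i : σ) (p : MvPolynomial σ K) :
    pderivOp K i p = pderiv i p := rfl

@[simp] theorem pderivProd_elim0 : pderivProd K (Fin.elim0 : Fin 0 → σ) = 1 := rfl

theorem pderivProd_cons {m : ℕ} (z : σ) (g : Fin m → σ) :
    pderivProd K (Fin.cons z g) = pderivOp K z * pderivProd K g := by
  simp [pderivProd]

end CommSemiring

section CommRing

variable [CommRing K]

theorem lie_X_mul_pderivOp_lmul (x y : σ) (q : MvPolynomial σ K) :
    ⁅Algebra.lmul K _ (X x) * pderivOp K y, Algebra.lmul K _ q⁆ =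
      Algebra.lmul K _ (X x * pderiv y q) :=
  LinearMap.ext fun p => by simp [Ring.lie_def]; ring

theorem lie_pderivOp_X_mul_pderivOp [DecidableEq σ] (x y z : σ) :
    ⁅pderivOp K z, Algebra.lmul K _ (X x) * pderivOp K y⁆ =
      (if z = x then (1 : K) else 0) • pderivOp K y :=
  LinearMap.ext fun p => by
    simp [Ring.lie_def, pderiv_pderiv_comm z y, pderiv_X, Pi.single_apply, eq_comm,
      apply_ite (fun f : Module.End K _ => f p)]

theorem lie_pderivProd_X_mul_pderivOp [DecidableEq σ] {m : ℕ} (x y : σ) (g : Fin m → σ) :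
    ⁅pderivProd K g, Algebra.lmul K _ (X x) * pderivOp K y⁆ =
      ∑ i, (if g i = x then (1 : K) else 0) • pderivProd K (Function.update g i y) := by
  induction g using Fin.consInduction with
  | elim0 => simp [Ring.lie_def]
  | cons z g ih =>
    rw [pderivProd_cons, Ring.mul_lie, lie_pderivOp_X_mul_pderivOp, ih, Fin.sum_univ_succ,
      add_comm]
    simp only [Fin.cons_zero, Fin.cons_succ, Fin.update_cons_zero, ← Fin.cons_update,
      pderivProd_cons, Finset.mul_sum, mul_smul_comm, smul_mul_assoc]

theorem lie_X_mul_pderivOp_lmul_mul_pderivProd [DecidableEq σ] {m : ℕ} (x y : σ)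
    (u v : Fin m → σ) :
    ⁅Algebra.lmul K _ (X x) * pderivOp K y, Algebra.lmul K _ (∏ i, X (u i)) * pderivProd K v⁆ =
      ∑ i, (if u i = y then (1 : K) else 0) •
          (Algebra.lmul K _ (∏ j, X (Function.update u i x j)) * pderivProd K v) -
        ∑ i, (if v i = x then (1 : K) else 0) •
          (Algebra.lmul K _ (∏ j, X (u j)) * pderivProd K (Function.update v i y)) := by
  rw [Ring.lie_mul, lie_X_mul_pderivOp_lmul, lie_pderivProd_X_mul_pderivOp, X_mul_pderiv_prod_X,
    map_sum, Finset.sum_mul, Finset.mul_sum]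
  simp only [map_smul, smul_mul_assoc, mul_smul_comm]

end CommRing

end MvPolynomial

attribute [local instance] LieRing.ofAssociativeRing

theorem Dop_eq_sum (N a b : ℕ) :
    Dop N a b = ∑ f ∈ Finset.range N, Algebra.lmul ℂ R (X (a, f)) * pderivOp ℂ (b, f) := rfl

theorem Vop_eq_sum (N : ℕ) {m : ℕ} (c d : Fin m → ℕ) :
    Vop N c d = ∑ e : Fin m → Fin N,
      Algebra.lmul ℂ R (∏ i, X (c i, (e i : ℕ))) * pderivProd ℂ (fun i => (d i, (e i : ℕ))) := rfl

theorem lie_Dop_lmul_mul_pderivProd (N a b : ℕ) {m : ℕ} (c d : Fin m → ℕ) (e : Fin m → Fin N) :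
    ⁅Dop N a b, Algebra.lmul ℂ R (∏ i, X (c i, (e i : ℕ))) *
        pderivProd ℂ (fun i => (d i, (e i : ℕ)))⁆ =
      ∑ i, (if b = c i then (1 : ℂ) else 0) •
          (Algebra.lmul ℂ R (∏ j, X (Function.update c i a j, (e j : ℕ))) *
            pderivProd ℂ (fun j => (d j, (e j : ℕ)))) -
        ∑ i, (if a = d i then (1 : ℂ) else 0) •
          (Algebra.lmul ℂ R (∏ j, X (c j, (e j : ℕ))) *
            pderivProd ℂ (fun j => (Function.update d i b j, (e j : ℕ)))) := by
  rw [Dop_eq_sum, sum_lie]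
  simp only [lie_X_mul_pderivOp_lmul_mul_pderivProd]
  rw [Finset.sum_sub_distrib, Finset.sum_comm, Finset.sum_comm (s := Finset.range N)]
  have he : ∀ i, (e i : ℕ) ∈ Finset.range N := fun i => Finset.mem_range.2 (e i).isLt
  congr 1 <;> refine Finset.sum_congr rfl fun i _ => ?_ <;>
    rw [Finset.sum_ite_prodMk_eq_smul _ (he i), Function.update_prodMk]

/-- the adjoint-action formula for the commutator `[D_N(a,b), V_N(c|d)]`. -/
theorem Dop_Vop_commutator (N m : ℕ) (a b : ℕ) (c d : Fin m → ℕ) :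
    Dop N a b ∘ₗ Vop N c d - Vop N c d ∘ₗ Dop N a b =
      (∑ i : Fin m, (if b = c i then (1:ℂ) else 0) • Vop N (Function.update c i a) d) -
        ∑ i : Fin m, (if a = d i then (1:ℂ) else 0) • Vop N c (Function.update d i b) := by
  change ⁅Dop N a b, Vop N c d⁆ = _
  simp only [Vop_eq_sum, lie_sum, lie_Dop_lmul_mul_pderivProd, Finset.sum_sub_distrib,
    Finset.smul_sum]
  rw [Finset.sum_comm, Finset.sum_comm (γ := Fin m → Fin N)]
end

section
/- For every N ∈ ℕ, every m ∈ ℕ, and all permutations σ, π of Fin m, the cut-and-join operator depends only on the conjugacy class (Young diagram) of the permutation: W_N(π ∘ σ ∘ π⁻¹) = W_N(σ) as ℂ-linear operators on R. Equivalently, if σ and τ are conjugate permutations of Fin m, then W_N(σ) = W_N(τ). -/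
open MvPolynomial

/-!
`V_N(a|b)` is unchanged when the `m` slots are relabelled simultaneously in `a`, `b` and the
summation index `e`: the monomial factor is a commutative product, and the partial derivatives
commute with each other. Substituting `a ∘ π⁻¹` for the summation variable of `W_N(π σ π⁻¹)`
turns each summand into such a relabelling of the corresponding summand of `W_N(σ)`.
-/

theorem MvPolynomial.pderiv_pderiv_comm_s4 {σ S : Type*} [CommSemiring S] (i j : σ)
    (p : MvPolynomial σ S) : pderiv i (pderiv j p) = pderiv j (pderiv i p) := by
  classical
  induction p using MvPolynomial.induction_on' with
  | monomial s c =>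
    by_cases h : i = j
    · rw [h]
    · simp only [pderiv_monomial, Finsupp.tsub_apply, Finsupp.single_apply, if_neg h,
        if_neg (Ne.symm h), Nat.sub_zero, tsub_right_comm]
      rw [mul_right_comm]
  | add p q hp hq => simp only [map_add, hp, hq]

theorem MvPolynomial.commute_pderiv {σ S : Type*} [CommSemiring S] (i j : σ) :
    Commute (pderiv (R := S) i).toLinearMap (pderiv (R := S) j).toLinearMap :=
  LinearMap.ext (pderiv_pderiv_comm_s4 i j)

theorem List.prod_ofFn_comp_perm {M : Type*} [Monoid M] {n : ℕ} (f : Fin n → M)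
    (hf : ∀ i j, Commute (f i) (f j)) (τ : Equiv.Perm (Fin n)) :
    (List.ofFn (f ∘ τ)).prod = (List.ofFn f).prod :=
  (τ.ofFn_comp_perm f).prod_eq' (List.pairwise_ofFn.2 fun _ _ _ => hf _ _)

theorem Vop_comp_perm (N : ℕ) {m : ℕ} (a b : Fin m → ℕ) (τ : Equiv.Perm (Fin m)) :
    Vop N (a ∘ τ) (b ∘ τ) = Vop N a b := by
  refine Fintype.sum_equiv (τ.arrowCongr (Equiv.refl (Fin N))) _ _ fun e => ?_
  obtain ⟨e', rfl⟩ : ∃ e', e = e' ∘ τ := ⟨e ∘ τ.symm, by simp [Function.comp_assoc]⟩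
  have he' : τ.arrowCongr (Equiv.refl (Fin N)) (e' ∘ τ) = e' := by ext; simp
  have hX : ∏ i, (X (a (τ i), (e' (τ i) : ℕ)) : R) = ∏ i, X (a i, (e' i : ℕ)) :=
    Equiv.prod_comp τ fun i => X (a i, (e' i : ℕ))
  have hD : (List.ofFn fun i => (pderiv (R := ℂ) (b (τ i), (e' (τ i) : ℕ))).toLinearMap).prod =
      (List.ofFn fun i => (pderiv (R := ℂ) (b i, (e' i : ℕ))).toLinearMap).prod :=
    List.prod_ofFn_comp_perm (fun i => (pderiv (R := ℂ) (b i, (e' i : ℕ))).toLinearMap)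
      (fun _ _ => commute_pderiv _ _) τ
  simp only [Function.comp_apply]
  rw [he', hX, hD]

/-- the cut-and-join operator `W_N(σ)` depends only on the conjugacy class
(Young diagram) of `σ`. -/
theorem Wop_conj_invariant (N m : ℕ) (σ π : Equiv.Perm (Fin m)) :
    Wop N (π * σ * π⁻¹) = Wop N σ := by
  rw [Wop, ← (π.arrowCongr (Equiv.refl (Fin N))).sum_comp]
  refine Fintype.sum_congr _ _ fun a => ?_
  have hσ : (fun i => (π.arrowCongr (Equiv.refl (Fin N)) a ((π * σ * π⁻¹) i) : ℕ)) =
      (fun i => (a (σ i) : ℕ)) ∘ π.symm := by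
    ext; simp [Equiv.Perm.mul_apply, Equiv.Perm.inv_def]
  rw [hσ]
  exact Vop_comp_perm N (fun i => (a i : ℕ)) (fun i => (a (σ i) : ℕ)) π.symm
end
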